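/- Let q = a + v ∈ ℍ_ℝ with v ≠ 0 and a > 1, let w = a + i|v| ∈ ℂ, and suppose for each t ∈ ℝ the decomposition B_q(t) = Re B_w(t) + (v/|v|) Im B_w(t) holds with {B_q(ℓ)}_{ℓ∈ℤ} absolutely summable. Then for |z| = 1, the complex quaternion ∑_{ℓ∈ℤ} B_q(ℓ) z^ℓ is invertible in ℍ_ℂ if and only if (∑_ℓ B_w(ℓ) z^ℓ)(∑_ℓ B_{w̄}(ℓ) z^ℓ) ≠ 0, where B_{w̄}(ℓ) = conjugate of B_w(ℓ); and in that case its inverse is (∑_ℓ [Re B_w(ℓ) - (v/|v|) Im B_w(ℓ)] z^ℓ) / ((∑_ℓ B_w(ℓ) z^ℓ)(∑_ℓ B_{w̄}(ℓ) z^ℓ)). -/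

import Mathlib

/-
Put `X = ∑ Re B_w(ℓ) z^ℓ`, `Y = ∑ Im B_w(ℓ) z^ℓ` and `ν = v/|v|`, a pure imaginary quaternion of
norm one. The symbol is then `X + Y ν`, the proposed numerator is its quaternion conjugate
`X - Y ν`, and its quaternion norm `X² + Y²` is `(X + iY)(X - iY)`, the product of the two complex
symbols. Over any field a quaternion is a unit iff its norm is nonzero, the inverse being the
conjugate divided by the norm.
-/

open Quaternion

noncomputable instance : NormedAddCommGroup ℍ[ℂ] :=
  NormedAddCommGroup.induced ℍ[ℂ] (Fin 4 → ℂ)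
    (QuaternionAlgebra.linearEquivTuple (-1 : ℂ) (0 : ℂ) (-1 : ℂ)).toLinearMap
    (QuaternionAlgebra.linearEquivTuple (-1 : ℂ) (0 : ℂ) (-1 : ℂ)).injective

/-- The canonical embedding of the real quaternions into the complexified quaternions. -/
def toC (q : ℍ[ℝ]) : ℍ[ℂ] := ⟨(q.re : ℂ), (q.imI : ℂ), (q.imJ : ℂ), (q.imK : ℂ)⟩

-- Continuity of the `ℂ`-action lets scalars be pulled out of `tsum`s in `ℍ[ℂ]`.
noncomputable instance : NormedSpace ℂ ℍ[ℂ] :=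
  NormedSpace.induced ℂ ℍ[ℂ] (Fin 4 → ℂ)
    (QuaternionAlgebra.linearEquivTuple (-1 : ℂ) (0 : ℂ) (-1 : ℂ)).toLinearMap

namespace Quaternion

section CommRing
variable {R : Type*} [CommRing R] {u : ℍ[R]}

theorem normSq_smul_one_add_smul (x y : R) (hu : u.re = 0) :
    normSq (x • 1 + y • u) = x ^ 2 + y ^ 2 * normSq u := by
  simp only [normSq_def', re_add, re_smul, re_one, imI_add, imI_smul, imI_one, imJ_add, imJ_smul,
    imJ_one, imK_add, imK_smul, imK_one, hu, smul_eq_mul]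
  ring

theorem star_smul_one_add_smul (x y : R) (hu : u.re = 0) :
    star (x • 1 + y • u) = x • 1 - y • u := by
  ext <;> simp [hu]

end CommRing

section Field
variable {K : Type*} [Field K] {a : ℍ[K]}

theorem mul_inv_normSq_smul_star (h : normSq a ≠ 0) : a * ((normSq a)⁻¹ • star a) = 1 := by
  rw [mul_smul_comm, self_mul_star, smul_coe, inv_mul_cancel₀ h, coe_one]

theorem inv_normSq_smul_star_mul (h : normSq a ≠ 0) : ((normSq a)⁻¹ • star a) * a = 1 := by
  rw [smul_mul_assoc, star_mul_self, smul_coe, inv_mul_cancel₀ h, coe_one]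

theorem isUnit_iff_normSq_ne_zero : IsUnit a ↔ normSq a ≠ 0 :=
  ⟨fun h => (h.map normSq).ne_zero, fun h =>
    ⟨⟨a, _, mul_inv_normSq_smul_star h, inv_normSq_smul_star_mul h⟩, rfl⟩⟩

end Field

theorem normSq_inv_norm_smul {v : ℍ[ℝ]} (hv : v ≠ 0) : normSq (‖v‖⁻¹ • v) = 1 := by
  rw [normSq_smul, normSq_eq_norm_mul_self, ← sq, inv_pow, inv_mul_cancel₀ (by positivity)]

end Quaternion

theorem re_toC (v : ℍ[ℝ]) : (toC v).re = v.re := rfl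

theorem toC_smul (r : ℝ) (v : ℍ[ℝ]) : toC (r • v) = r • toC v := by
  ext <;> exact Complex.ofReal_mul _ _

theorem normSq_toC (v : ℍ[ℝ]) : normSq (toC v) = ((normSq v : ℝ) : ℂ) := by
  rw [normSq_def', normSq_def']
  simp [toC]

section LaurentSeries

variable {z : ℂ}

theorem summable_mul_zpow_of_norm_le {f : ℤ → ℂ} {g : ℤ → ℝ} (hg : Summable g)
    (hfg : ∀ ℓ, ‖f ℓ‖ ≤ g ℓ) (hz : ‖z‖ = 1) : Summable fun ℓ => f ℓ * z ^ ℓ :=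
  .of_norm_bounded hg fun ℓ => by rw [norm_mul, norm_zpow, hz, one_zpow, mul_one]; exact hfg ℓ

variable {f : ℤ → ℂ}

theorem summable_re_mul_zpow (hf : Summable fun ℓ => ‖f ℓ‖) (hz : ‖z‖ = 1) :
    Summable fun ℓ => ((f ℓ).re : ℂ) * z ^ ℓ :=
  summable_mul_zpow_of_norm_le hf (fun ℓ => by simpa using Complex.abs_re_le_norm (f ℓ)) hz

theorem summable_im_mul_zpow (hf : Summable fun ℓ => ‖f ℓ‖) (hz : ‖z‖ = 1) :
    Summable fun ℓ => ((f ℓ).im : ℂ) * z ^ ℓ :=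
  summable_mul_zpow_of_norm_le hf (fun ℓ => by simpa using Complex.abs_im_le_norm (f ℓ)) hz

theorem tsum_mul_zpow_eq_re_add_im (hf : Summable fun ℓ => ‖f ℓ‖) (hz : ‖z‖ = 1) :
    ∑' ℓ, f ℓ * z ^ ℓ =
      ∑' ℓ, ((f ℓ).re : ℂ) * z ^ ℓ + Complex.I * ∑' ℓ, ((f ℓ).im : ℂ) * z ^ ℓ := by
  rw [← tsum_mul_left, ← (summable_re_mul_zpow hf hz).tsum_add
    ((summable_im_mul_zpow hf hz).mul_left _)]
  refine tsum_congr fun ℓ => ?_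
  conv_lhs => rw [← Complex.re_add_im (f ℓ)]
  ring

theorem tsum_conj_mul_zpow_eq_re_sub_im (hf : Summable fun ℓ => ‖f ℓ‖) (hz : ‖z‖ = 1) :
    ∑' ℓ, starRingEnd ℂ (f ℓ) * z ^ ℓ =
      ∑' ℓ, ((f ℓ).re : ℂ) * z ^ ℓ - Complex.I * ∑' ℓ, ((f ℓ).im : ℂ) * z ^ ℓ := by
  rw [← tsum_mul_left, ← (summable_re_mul_zpow hf hz).tsum_sub
    ((summable_im_mul_zpow hf hz).mul_left _)]
  refine tsum_congr fun ℓ => ?_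
  conv_lhs => rw [← Complex.re_add_im (f ℓ)]
  simp only [map_add, map_mul, Complex.conj_ofReal, Complex.conj_I]
  ring

theorem tsum_mul_zpow_mul_tsum_conj_mul_zpow (hf : Summable fun ℓ => ‖f ℓ‖) (hz : ‖z‖ = 1) :
    (∑' ℓ, f ℓ * z ^ ℓ) * (∑' ℓ, starRingEnd ℂ (f ℓ) * z ^ ℓ) =
      (∑' ℓ, ((f ℓ).re : ℂ) * z ^ ℓ) ^ 2 + (∑' ℓ, ((f ℓ).im : ℂ) * z ^ ℓ) ^ 2 := by
  rw [tsum_mul_zpow_eq_re_add_im hf hz, tsum_conj_mul_zpow_eq_re_sub_im hf hz]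
  linear_combination (-(∑' ℓ, ((f ℓ).im : ℂ) * z ^ ℓ) ^ 2) * Complex.I_sq

theorem tsum_zpow_smul_re_smul_add_im_smul {E : Type*} [NormedAddCommGroup E] [NormedSpace ℂ E]
    [Module ℝ E] [IsScalarTower ℝ ℂ E] (hf : Summable fun ℓ => ‖f ℓ‖) (hz : ‖z‖ = 1) (a b : E) :
    ∑' ℓ, z ^ ℓ • ((f ℓ).re • a + (f ℓ).im • b) =
      (∑' ℓ, ((f ℓ).re : ℂ) * z ^ ℓ) • a + (∑' ℓ, ((f ℓ).im : ℂ) * z ^ ℓ) • b := by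
  have hre := summable_re_mul_zpow hf hz
  have him := summable_im_mul_zpow hf hz
  rw [← hre.tsum_smul_const, ← him.tsum_smul_const,
    ← (hre.smul_const a).tsum_add (him.smul_const b)]
  refine tsum_congr fun ℓ => ?_
  simp only [smul_add, ← algebraMap_smul ℂ (f ℓ).re, ← algebraMap_smul ℂ (f ℓ).im, smul_smul,
    Complex.coe_algebraMap, mul_comm]

end LaurentSeries

theorem spline_symbol_invertible_general (q : ℍ[ℝ]) (hv : q.im ≠ 0)
    (Bw : ℤ → ℂ) (hsum : Summable fun ℓ : ℤ => ‖Bw ℓ‖)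
    (Bq : ℤ → ℍ[ℂ])
    (hBq : ∀ ℓ : ℤ, Bq ℓ = (Bw ℓ).re • (1 : ℍ[ℂ]) + ((Bw ℓ).im / ‖q.im‖) • toC q.im)
    (z : ℂ) (hz : ‖z‖ = 1) :
    (IsUnit (∑' ℓ : ℤ, (z ^ ℓ) • Bq ℓ) ↔
        (∑' ℓ : ℤ, Bw ℓ * z ^ ℓ) * (∑' ℓ : ℤ, starRingEnd ℂ (Bw ℓ) * z ^ ℓ) ≠ 0) ∧
      ((∑' ℓ : ℤ, Bw ℓ * z ^ ℓ) * (∑' ℓ : ℤ, starRingEnd ℂ (Bw ℓ) * z ^ ℓ) ≠ 0 →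
        (∑' ℓ : ℤ, (z ^ ℓ) • Bq ℓ) *
            (((∑' ℓ : ℤ, Bw ℓ * z ^ ℓ) * (∑' ℓ : ℤ, starRingEnd ℂ (Bw ℓ) * z ^ ℓ))⁻¹ •
              ∑' ℓ : ℤ, (z ^ ℓ) •
                ((Bw ℓ).re • (1 : ℍ[ℂ]) - ((Bw ℓ).im / ‖q.im‖) • toC q.im)) = 1 ∧
          (((∑' ℓ : ℤ, Bw ℓ * z ^ ℓ) * (∑' ℓ : ℤ, starRingEnd ℂ (Bw ℓ) * z ^ ℓ))⁻¹ •
              ∑' ℓ : ℤ, (z ^ ℓ) •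
                ((Bw ℓ).re • (1 : ℍ[ℂ]) - ((Bw ℓ).im / ‖q.im‖) • toC q.im)) *
            (∑' ℓ : ℤ, (z ^ ℓ) • Bq ℓ) = 1) := by
  set u := toC (‖q.im‖⁻¹ • q.im)
  have hu_re : u.re = 0 := by simp [u, re_toC]
  have hu_normSq : normSq u = 1 := by
    rw [normSq_toC, normSq_inv_norm_smul hv, Complex.ofReal_one]
  have hdir : ∀ ℓ, ((Bw ℓ).im / ‖q.im‖) • toC q.im = (Bw ℓ).im • u := fun ℓ => by
    rw [div_eq_mul_inv, ← smul_smul, ← toC_smul]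
  set X := ∑' ℓ, ((Bw ℓ).re : ℂ) * z ^ ℓ
  set Y := ∑' ℓ, ((Bw ℓ).im : ℂ) * z ^ ℓ
  have hS : ∑' ℓ, z ^ ℓ • Bq ℓ = X • 1 + Y • u := by
    simp only [hBq, hdir]
    exact tsum_zpow_smul_re_smul_add_im_smul hsum hz 1 u
  have hT : ∑' ℓ, z ^ ℓ • ((Bw ℓ).re • (1 : ℍ[ℂ]) - ((Bw ℓ).im / ‖q.im‖) • toC q.im) =
      star (X • 1 + Y • u) := by
    simp only [hdir, sub_eq_add_neg, ← smul_neg, star_smul_one_add_smul X Y hu_re]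
    exact tsum_zpow_smul_re_smul_add_im_smul hsum hz 1 (-u)
  have hN : normSq (X • 1 + Y • u) = X ^ 2 + Y ^ 2 := by
    rw [normSq_smul_one_add_smul X Y hu_re, hu_normSq, mul_one]
  rw [tsum_mul_zpow_mul_tsum_conj_mul_zpow hsum hz, hS, hT, ← hN]
  exact ⟨isUnit_iff_normSq_ne_zero, fun h =>
    ⟨mul_inv_normSq_smul_star h, inv_normSq_smul_star_mul h⟩⟩

/-- Let `q = a + v` with `v ≠ 0`, `a > 1`, `w = a + i|v|`, and suppose
`B_q(ℓ) = Re B_w(ℓ) + (v/|v|) Im B_w(ℓ)` with `{B_q(ℓ)}` absolutely summable.  For `|z| = 1`,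
the complex quaternion `∑_ℓ B_q(ℓ) z^ℓ` is invertible in `ℍ_ℂ` iff
`(∑_ℓ B_w(ℓ) z^ℓ)(∑_ℓ B_{w̄}(ℓ) z^ℓ) ≠ 0`, and in that case its inverse is
`(∑_ℓ [Re B_w(ℓ) - (v/|v|) Im B_w(ℓ)] z^ℓ) / ((∑_ℓ B_w(ℓ) z^ℓ)(∑_ℓ B_{w̄}(ℓ) z^ℓ))`. -/
theorem spline_symbol_invertible (q : ℍ[ℝ]) (hv : q.im ≠ 0) (ha : 1 < q.re)
    (w : ℂ) (hw : w = (q.re : ℂ) + (‖q.im‖ : ℂ) * Complex.I)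
    (Bw : ℤ → ℂ) (hsum : Summable fun ℓ : ℤ => ‖Bw ℓ‖)
    (Bq : ℤ → ℍ[ℂ])
    (hBq : ∀ ℓ : ℤ, Bq ℓ = (Bw ℓ).re • (1 : ℍ[ℂ]) + ((Bw ℓ).im / ‖q.im‖) • toC q.im)
    (z : ℂ) (hz : ‖z‖ = 1) :
    (IsUnit (∑' ℓ : ℤ, (z ^ ℓ) • Bq ℓ) ↔
        (∑' ℓ : ℤ, Bw ℓ * z ^ ℓ) * (∑' ℓ : ℤ, starRingEnd ℂ (Bw ℓ) * z ^ ℓ) ≠ 0) ∧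
      ((∑' ℓ : ℤ, Bw ℓ * z ^ ℓ) * (∑' ℓ : ℤ, starRingEnd ℂ (Bw ℓ) * z ^ ℓ) ≠ 0 →
        (∑' ℓ : ℤ, (z ^ ℓ) • Bq ℓ) *
            (((∑' ℓ : ℤ, Bw ℓ * z ^ ℓ) * (∑' ℓ : ℤ, starRingEnd ℂ (Bw ℓ) * z ^ ℓ))⁻¹ •
              ∑' ℓ : ℤ, (z ^ ℓ) •
                ((Bw ℓ).re • (1 : ℍ[ℂ]) - ((Bw ℓ).im / ‖q.im‖) • toC q.im)) = 1 ∧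
          (((∑' ℓ : ℤ, Bw ℓ * z ^ ℓ) * (∑' ℓ : ℤ, starRingEnd ℂ (Bw ℓ) * z ^ ℓ))⁻¹ •
              ∑' ℓ : ℤ, (z ^ ℓ) •
                ((Bw ℓ).re • (1 : ℍ[ℂ]) - ((Bw ℓ).im / ‖q.im‖) • toC q.im)) *
            (∑' ℓ : ℤ, (z ^ ℓ) • Bq ℓ) = 1) :=
  spline_symbol_invertible_general q hv Bw hsum Bq hBq z hz
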